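/- arXiv:1508.05599 — 4 statements merged into one kernel-verified Lean document; each statement's English description precedes it below -/
import Mathlib

section
/- Let U and U' be finite-dimensional real vector spaces, let C ⊆ U be a nonempty open convex cone, and let K ⊆ C × U' be an open subset that is invariant under translations in C × {0}, i.e. k + (c,0) ∈ K for all k ∈ K and c ∈ C. Then the restriction of the projection U × U' → U' to a map from K onto its image π_{U'}(K) is a homotopy equivalence. -/
/-!
Fix `c ∈ C`. Over `y ∈ π(K)` the admissible heights `{s > 0 | (s • c, y) ∈ K}` form a nonempty
up-closed interval, and since `K` is open any one admissible height stays admissible near `y`;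
a partition of unity glues these local constants into a continuous height `σ`, so
`y ↦ (σ y • c, y)` is a continuous section of the projection. The section composed with the
projection is homotopic to the identity through the points `(a • x + b • σ(y) • c, y)` with
`a, b ∈ [0, 1]` one of which equals `1`: each is a translate of `(x, y)` or of `(σ y • c, y)`
by an element of `C × {0}`.
-/

open Filter Topology Set

section ConeInvariant

variable {U U' : Type*} [AddCommGroup U] [Module ℝ U] [AddCommGroup U']
  {C : Set U} {K : Set (U × U')}

theorem add_smul_mem_of_cone_invariant (hCcone : ∀ x ∈ C, ∀ t : ℝ, 0 < t → t • x ∈ C)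
    (hKinv : ∀ k ∈ K, ∀ c ∈ C, k + (c, (0 : U')) ∈ K) {p : U × U'} (hp : p ∈ K)
    {c : U} (hc : c ∈ C) {a : ℝ} (ha : 0 ≤ a) : p + (a • c, (0 : U')) ∈ K := by
  rcases ha.eq_or_lt with rfl | ha
  · rwa [zero_smul, Prod.mk_zero_zero, add_zero]
  · exact hKinv p hp _ (hCcone c hc a ha)

theorem smul_add_smul_mem_of_cone_invariant (hCcone : ∀ x ∈ C, ∀ t : ℝ, 0 < t → t • x ∈ C)
    (hKinv : ∀ k ∈ K, ∀ c ∈ C, k + (c, (0 : U')) ∈ K) (hKsub : K ⊆ C ×ˢ (univ : Set U'))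
    {x z : U} {y : U'} (hx : (x, y) ∈ K) (hz : (z, y) ∈ K) {a b : ℝ} (ha : 0 ≤ a) (hb : 0 ≤ b)
    (hab : a = 1 ∨ b = 1) : (a • x + b • z, y) ∈ K := by
  rcases hab with rfl | rfl
  · simpa using add_smul_mem_of_cone_invariant hCcone hKinv hx (hKsub hz).1 hb
  · simpa [add_comm] using add_smul_mem_of_cone_invariant hCcone hKinv hz (hKsub hx).1 ha

theorem smul_mem_of_le_of_cone_invariant (hCcone : ∀ x ∈ C, ∀ t : ℝ, 0 < t → t • x ∈ C)
    (hKinv : ∀ k ∈ K, ∀ c ∈ C, k + (c, (0 : U')) ∈ K) {c : U} (hc : c ∈ C) {y : U'}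
    {s s' : ℝ} (hs : (s • c, y) ∈ K) (hss' : s ≤ s') : (s' • c, y) ∈ K := by
  simpa [← add_smul] using add_smul_mem_of_cone_invariant hCcone hKinv hs hc (sub_nonneg.2 hss')

theorem exists_smul_mem_of_cone_invariant [TopologicalSpace U] [IsTopologicalAddGroup U]
    [ContinuousSMul ℝ U] (hCopen : IsOpen C) (hCcone : ∀ x ∈ C, ∀ t : ℝ, 0 < t → t • x ∈ C)
    (hKinv : ∀ k ∈ K, ∀ c ∈ C, k + (c, (0 : U')) ∈ K) {c : U} (hc : c ∈ C) {x : U} {y : U'}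
    (hxy : (x, y) ∈ K) : ∃ s : ℝ, 0 < s ∧ (s • c, y) ∈ K := by
  have hlim : Tendsto (fun s : ℝ => c - s⁻¹ • x) atTop (𝓝 c) := by
    simpa using tendsto_const_nhds.sub ((tendsto_inv_atTop_zero (𝕜 := ℝ)).smul_const x)
  obtain ⟨s, hs, hsC⟩ :=
    ((eventually_gt_atTop 0).and (hlim.eventually (hCopen.mem_nhds hc))).exists
  refine ⟨s, hs, ?_⟩
  have hsplit : (s • c, y) = (x, y) + (s • (c - s⁻¹ • x), (0 : U')) := by
    simp [smul_sub, smul_inv_smul₀ hs.ne']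
  rw [hsplit]
  exact add_smul_mem_of_cone_invariant hCcone hKinv hxy hsC hs.le

theorem homotopic_section_comp_id_of_cone_invariant [TopologicalSpace U] [ContinuousAdd U]
    [ContinuousSMul ℝ U] [TopologicalSpace U'] (hCcone : ∀ x ∈ C, ∀ t : ℝ, 0 < t → t • x ∈ C)
    (hKinv : ∀ k ∈ K, ∀ c ∈ C, k + (c, (0 : U')) ∈ K) (hKsub : K ⊆ C ×ˢ (univ : Set U'))
    (g : C(Prod.snd '' K, K)) (hg : ∀ y, (g y : U × U').2 = y)
    (f : C(K, Prod.snd '' K)) (hf : ∀ k : K, (f k : U') = (k : U × U').2) :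
    (g.comp f).Homotopic (ContinuousMap.id K) := by
  have hgf : ∀ k, ((g (f k) : U × U').1, (k : U × U').2) = g (f k) :=
    fun k => Prod.ext rfl (by rw [hg, hf])
  have hmem : ∀ q : unitInterval × K,
      (min 1 (2 * (q.1 : ℝ)) • (q.2 : U × U').1 +
        min 1 (2 - 2 * (q.1 : ℝ)) • (g (f q.2) : U × U').1, (q.2 : U × U').2) ∈ K := by
    rintro ⟨⟨τ, hτ0, hτ1⟩, k⟩
    refine smul_add_smul_mem_of_cone_invariant hCcone hKinv hKsub k.2 (hgf k ▸ (g (f k)).2)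
      (by positivity) (by simp; linarith) ?_
    rcases le_total τ (1 / 2) with hτ | hτ
    · exact .inr (min_eq_left (by linarith))
    · exact .inl (min_eq_left (by linarith))
  refine ⟨⟨⟨fun q => ⟨_, hmem q⟩, by fun_prop⟩, fun k => ?_, fun k => ?_⟩⟩
  · ext1
    simpa using hgf k
  · ext1
    simp

end ConeInvariant

theorem exists_continuous_section_snd_of_cone_invariant {U U' : Type*} [AddCommGroup U]
    [Module ℝ U] [TopologicalSpace U] [IsTopologicalAddGroup U] [ContinuousSMul ℝ U]
    [NormedAddCommGroup U'] {C : Set U} {K : Set (U × U')} (hCopen : IsOpen C)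
    (hCcone : ∀ x ∈ C, ∀ t : ℝ, 0 < t → t • x ∈ C) (hKopen : IsOpen K)
    (hKinv : ∀ k ∈ K, ∀ c ∈ C, k + (c, (0 : U')) ∈ K) {c : U}
    (hc : c ∈ C) : ∃ g : C(Prod.snd '' K, K), ∀ y, (g y : U × U').2 = y := by
  have hconvex : ∀ y : Prod.snd '' K, Convex ℝ {s : ℝ | 0 < s ∧ (s • c, (y : U')) ∈ K} := by
    refine fun y => OrdConnected.convex ⟨fun _ hs _ _ _ hr => ⟨hs.1.trans_le hr.1, ?_⟩⟩
    exact smul_mem_of_le_of_cone_invariant hCcone hKinv hc hs.2 hr.1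
  have hlocal : ∀ y : Prod.snd '' K,
      ∃ s : ℝ, ∀ᶠ y' : Prod.snd '' K in 𝓝 y, s ∈ {s : ℝ | 0 < s ∧ (s • c, (y' : U')) ∈ K} := by
    rintro ⟨_, ⟨x, y⟩, hxy, rfl⟩
    obtain ⟨s, hs, hsK⟩ := exists_smul_mem_of_cone_invariant hCopen hCcone hKinv hc hxy
    have hcont : Continuous fun y' : Prod.snd '' K => (s • c, (y' : U')) := by fun_prop
    exact ⟨s, mem_of_superset ((hKopen.preimage hcont).mem_nhds hsK) fun _ h => ⟨hs, h⟩⟩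
  obtain ⟨σ, hσ⟩ := exists_continuous_forall_mem_convex_of_local_const hconvex hlocal
  exact ⟨⟨fun y => ⟨(σ y • c, y), (hσ y).2⟩, by fun_prop⟩, fun _ => rfl⟩

theorem projection_of_cone_invariant_homotopyEquiv_general {U U' : Type}
    [NormedAddCommGroup U] [NormedSpace ℝ U]
    [NormedAddCommGroup U']
    (C : Set U) (hCne : C.Nonempty) (hCopen : IsOpen C)
    (hCcone : ∀ x ∈ C, ∀ t : ℝ, 0 < t → t • x ∈ C)
    (K : Set (U × U')) (hKopen : IsOpen K) (hKsub : K ⊆ C ×ˢ (Set.univ : Set U'))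
    (hKinv : ∀ k ∈ K, ∀ c ∈ C, k + (c, (0 : U')) ∈ K)
    (f : C(K, Prod.snd '' K)) (hf : ∀ k : K, (f k : U') = (k : U × U').2) :
    ∃ g : C(Prod.snd '' K, K),
      (g.comp f).Homotopic (ContinuousMap.id _) ∧
      (f.comp g).Homotopic (ContinuousMap.id _) := by
  obtain ⟨c, hc⟩ := hCne
  obtain ⟨g, hg⟩ :=
    exists_continuous_section_snd_of_cone_invariant hCopen hCcone hKopen hKinv hc
  have hfg : f.comp g = ContinuousMap.id _ := by
    ext y
    simp [hf, hg]
  exact ⟨g, homotopic_section_comp_id_of_cone_invariant hCcone hKinv hKsub g hg f hf,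
    hfg ▸ .refl _⟩

/-- Let `C` be a nonempty open convex cone in a finite-dimensional real vector space `U` and
let `K ⊆ C × U'` be an open subset invariant under translations in `C × {0}`. Then the
restriction to `K` of the projection `U × U' → U'`, viewed as a map onto its image
`π_{U'}(K)`, is a homotopy equivalence. -/
theorem projection_of_cone_invariant_homotopyEquiv {U U' : Type}
    [NormedAddCommGroup U] [NormedSpace ℝ U] [FiniteDimensional ℝ U]
    [NormedAddCommGroup U'] [NormedSpace ℝ U'] [FiniteDimensional ℝ U']
    (C : Set U) (hCne : C.Nonempty) (hCopen : IsOpen C) (hCconv : Convex ℝ C)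
    (hCcone : ∀ x ∈ C, ∀ t : ℝ, 0 < t → t • x ∈ C)
    (K : Set (U × U')) (hKopen : IsOpen K) (hKsub : K ⊆ C ×ˢ (Set.univ : Set U'))
    (hKinv : ∀ k ∈ K, ∀ c ∈ C, k + (c, (0 : U')) ∈ K)
    (f : C(K, Prod.snd '' K)) (hf : ∀ k : K, (f k : U') = (k : U × U').2) :
    ∃ g : C(Prod.snd '' K, K),
      (g.comp f).Homotopic (ContinuousMap.id _) ∧
      (f.comp g).Homotopic (ContinuousMap.id _) :=
  projection_of_cone_invariant_homotopyEquiv_general C hCne hCopen hCcone K hKopen hKsub hKinv f hf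
end

section
/- Let C be a nonempty open convex cone in a finite-dimensional real vector space and let K ⊆ C be an open subset with K + C ⊆ K (i.e. k + c ∈ K for all k ∈ K, c ∈ C). If K is nonempty then K is contractible. -/
/-- An open subset `K` of a nonempty open convex cone `C` in a finite-dimensional real vector
space satisfying `K + C ⊆ K` is contractible (if nonempty). -/
theorem contractible_of_cocore {U : Type} [NormedAddCommGroup U] [NormedSpace ℝ U]
    [FiniteDimensional ℝ U] (C K : Set U)
    (hCne : C.Nonempty) (hCopen : IsOpen C) (hCconv : Convex ℝ C)
    (hCcone : ∀ x ∈ C, ∀ t : ℝ, 0 < t → t • x ∈ C)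
    (hKC : K ⊆ C) (hKopen : IsOpen K)
    (hKinv : ∀ k ∈ K, ∀ c ∈ C, k + c ∈ K)
    (hKne : K.Nonempty) :
    ContractibleSpace K := by
  obtain ⟨k₀, hk₀⟩ := hKne
  have hk₀C : k₀ ∈ C := hKC hk₀
  -- membership lemma: k + t • k₀ ∈ K for t ≥ 0
  have mem1 : ∀ (t : ℝ), 0 ≤ t → ∀ k ∈ K, k + t • k₀ ∈ K := by
    intro t ht k hk
    rcases ht.eq_or_lt with h | h
    · simp [← h, hk]
    · exact hKinv k hk _ (hCcone k₀ hk₀C t h)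
  have h2k₀ : (2 : ℝ) • k₀ ∈ K := by
    have := hKinv k₀ hk₀ k₀ hk₀C
    have e : (2 : ℝ) • k₀ = k₀ + k₀ := by module
    rwa [e]
  rw [contractible_iff_id_nullhomotopic]
  refine ⟨⟨(2 : ℝ) • k₀, h2k₀⟩, ?_⟩
  -- intermediate map f : k ↦ k + k₀
  let f : C(K, K) := ⟨fun k => ⟨(k : U) + k₀, hKinv _ k.2 _ hk₀C⟩, by
    refine Continuous.subtype_mk ?_ _
    exact (continuous_subtype_val).add continuous_const⟩
  have H1 : (ContinuousMap.id K).Homotopic f := by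
    refine ⟨⟨⟨fun p => ⟨(p.2 : U) + (p.1 : ℝ) • k₀, mem1 _ p.1.2.1 _ p.2.2⟩, ?_⟩, ?_, ?_⟩⟩
    · refine Continuous.subtype_mk ?_ _
      exact (continuous_subtype_val.comp continuous_snd).add
        (((continuous_subtype_val.comp continuous_fst)).smul continuous_const)
    · intro k; ext; simp
    · intro k; ext; simp [f]
  have H2 : f.Homotopic (ContinuousMap.const K ⟨(2 : ℝ) • k₀, h2k₀⟩) := by
    refine ⟨⟨⟨fun p => ⟨(1 - (p.1 : ℝ)) • (p.2 : U) + (1 + (p.1 : ℝ)) • k₀, ?_⟩, ?_⟩, ?_, ?_⟩⟩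
    · have hc : (1 - (p.1 : ℝ)) • (p.2 : U) + (p.1 : ℝ) • k₀ ∈ C :=
        hCconv (hKC p.2.2) hk₀C (by linarith [p.1.2.2]) p.1.2.1 (by ring)
      have := hKinv k₀ hk₀ _ hc
      have e : (1 - (p.1 : ℝ)) • (p.2 : U) + (1 + (p.1 : ℝ)) • k₀
          = k₀ + ((1 - (p.1 : ℝ)) • (p.2 : U) + (p.1 : ℝ) • k₀) := by module
      rwa [e]
    · refine Continuous.subtype_mk ?_ _
      have ht : Continuous fun p : unitInterval × K => (p.1 : ℝ) :=
        continuous_subtype_val.comp continuous_fst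
      have hx : Continuous fun p : unitInterval × K => (p.2 : U) :=
        continuous_subtype_val.comp continuous_snd
      exact ((continuous_const.sub ht).smul hx).add
        ((continuous_const.add ht).smul continuous_const)
    · intro k; ext; simp [f]
    · intro k; ext; simp; module
  exact H1.trans H2
end

section
/- Let (V, ω) be a real symplectic vector space (a finite-dimensional real vector space with a nondegenerate alternating bilinear form). Then the symplectic Lie algebra sp(V) = {A ∈ End(V) : ω(Ax, y) + ω(x, Ay) = 0 for all x, y ∈ V} is equal to the linear span of the endomorphisms S_a : x ↦ ω(x, a)·a, where a ranges over V. -/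
/-!
For `A ∈ sp(V)` the bilinear form `(x, y) ↦ ω(Ax, y)` is symmetric, hence diagonal in some basis
`vᵢ`: `ω(Ax, y) = ∑ cᵢ vᵢ*(x) vᵢ*(y)`. By nondegeneracy each coordinate functional is
`vᵢ* = ω(·, aᵢ)`, and since `ω(S_a x, y) = -ω(x, a) ω(y, a)`, the endomorphisms `A` and
`-∑ cᵢ S_{aᵢ}` induce the same form, so they are equal. Conversely every `S_a` lies in `sp(V)`
because `ω` is alternating.
-/

variable {V : Type} [AddCommGroup V] [Module ℝ V]

/-- The rank-one "square" endomorphism `S_a : x ↦ ω(x, a)·a` associated to `a ∈ V`. -/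
def sqEndo (ω : V →ₗ[ℝ] V →ₗ[ℝ] ℝ) (a : V) : V →ₗ[ℝ] V where
  toFun x := ω x a • a
  map_add' x y := by simp [map_add, add_smul]
  map_smul' c x := by simp [map_smul, mul_smul]

/-- The symplectic Lie algebra `sp(V)` of a symplectic form `ω`, as a submodule of `End(V)`:
the endomorphisms `A` with `ω(Ax, y) + ω(x, Ay) = 0` for all `x, y`. -/
def spLieAlgebra (ω : V →ₗ[ℝ] V →ₗ[ℝ] ℝ) : Submodule ℝ (V →ₗ[ℝ] V) where
  carrier := {A | ∀ x y, ω (A x) y + ω x (A y) = 0}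
  zero_mem' := by intro x y; simp
  add_mem' := by
    intro A B hA hB x y
    have h1 := hA x y
    have h2 := hB x y
    simp only [LinearMap.add_apply, map_add, LinearMap.add_apply] at *
    linarith
  smul_mem' := by
    intro c A hA x y
    have h := hA x y
    simp only [LinearMap.smul_apply, map_smul, LinearMap.smul_apply, smul_eq_mul] at *
    linear_combination c * h

namespace LinearMap

variable {K W : Type*} [Field K] [AddCommGroup W] [Module K W]

theorem IsOrthoᵢ.apply_eq_sum {ι : Type*} [Fintype ι]
    {B : W →ₗ[K] W →ₗ[K] K} {v : Module.Basis ι K W} (hv : B.IsOrthoᵢ v) (x y : W) :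
    B x y = ∑ i, B (v i) (v i) * (v.repr x i * v.repr y i) := by
  have basis_left : ∀ i, B (v i) y = v.repr y i * B (v i) (v i) := by
    intro i
    conv_lhs => rw [← v.sum_repr y]
    simp only [map_sum, map_smul, smul_eq_mul]
    refine Finset.sum_eq_single i (fun j _ hji => ?_) (by simp)
    rw [hv hji.symm, mul_zero]
  conv_lhs => rw [← v.sum_repr x]
  simp only [map_sum, map_smul, LinearMap.sum_apply, LinearMap.smul_apply, smul_eq_mul,
    basis_left]
  exact Finset.sum_congr rfl fun i _ => by ring

theorem IsAlt.exists_forall_apply_eq [FiniteDimensional K W] {ω : W →ₗ[K] W →ₗ[K] K}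
    (hω : ω.IsAlt) (hsep : ω.SeparatingLeft) (ℓ : Module.Dual K W) : ∃ a, ∀ x, ω x a = ℓ x :=
  have hnd : ω.flip.Nondegenerate :=
    flip_nondegenerate.2 (hω.isRefl.nondegenerate_iff_separatingLeft.2 hsep)
  ⟨(BilinForm.toDual ω.flip hnd).symm ℓ,
    BilinForm.apply_toDual_symm_apply (B := ω.flip) (hB := hnd) ℓ⟩

theorem SeparatingLeft.ext_comp {ω : W →ₗ[K] W →ₗ[K] K} (hsep : ω.SeparatingLeft)
    {A C : W →ₗ[K] W} (h : ∀ x y, ω (A x) y = ω (C x) y) : A = C := by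
  ext x
  rw [← sub_eq_zero]
  exact hsep _ fun y => by rw [map_sub, sub_apply, h, sub_self]

end LinearMap

open LinearMap

variable {ω : V →ₗ[ℝ] V →ₗ[ℝ] ℝ}

@[simp]
theorem sqEndo_apply (a x : V) : sqEndo ω a x = ω x a • a := rfl

theorem apply_sqEndo_apply (hω : ω.IsAlt) (a x y : V) :
    ω (sqEndo ω a x) y = -(ω x a * ω y a) := by
  rw [sqEndo_apply, map_smul, LinearMap.smul_apply, smul_eq_mul, ← hω.neg a y, mul_neg, neg_neg]

theorem sqEndo_mem_spLieAlgebra (hω : ω.IsAlt) (a : V) : sqEndo ω a ∈ spLieAlgebra ω := by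
  intro x y
  rw [apply_sqEndo_apply hω, sqEndo_apply, map_smul, smul_eq_mul]
  ring

theorem isSymm_comp_of_mem_spLieAlgebra (hω : ω.IsAlt) {A : V →ₗ[ℝ] V}
    (hA : A ∈ spLieAlgebra ω) : (ω ∘ₗ A).IsSymm :=
  ⟨fun x y => by
    rw [RingHom.id_apply, comp_apply, comp_apply, ← hω.neg x (A y), eq_neg_iff_add_eq_zero]
    exact hA x y⟩

theorem span_sqEndo_le_spLieAlgebra (hω : ω.IsAlt) :
    Submodule.span ℝ (Set.range (sqEndo ω)) ≤ spLieAlgebra ω :=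
  Submodule.span_le.2 (Set.range_subset_iff.2 (sqEndo_mem_spLieAlgebra hω))

theorem spLieAlgebra_le_span_sqEndo [FiniteDimensional ℝ V] (hω : ω.IsAlt)
    (hsep : ω.SeparatingLeft) : spLieAlgebra ω ≤ Submodule.span ℝ (Set.range (sqEndo ω)) := by
  intro A hA
  obtain ⟨v, hv⟩ := BilinForm.exists_orthogonal_basis (isSymm_comp_of_mem_spLieAlgebra hω hA)
  choose a ha using fun i => hω.exists_forall_apply_eq hsep (v.coord i)
  have hA_eq : A = ∑ i, (-ω (A (v i)) (v i)) • sqEndo ω (a i) := by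
    refine hsep.ext_comp fun x y => ?_
    simp only [LinearMap.sum_apply, LinearMap.smul_apply, map_sum, map_smul,
      apply_sqEndo_apply hω, ha, Module.Basis.coord_apply, smul_eq_mul, neg_mul_neg]
    exact hv.apply_eq_sum x y
  rw [hA_eq]
  exact Submodule.sum_mem _ fun i _ => Submodule.smul_mem _ _ (Submodule.subset_span ⟨a i, rfl⟩)

/-- For a real symplectic vector space `(V, ω)`, the symplectic Lie algebra `sp(V)` equals
the linear span of the endomorphisms `S_a : x ↦ ω(x, a)·a`, `a ∈ V`. -/
theorem spLieAlgebra_eq_span_squares [FiniteDimensional ℝ V]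
    (ω : V →ₗ[ℝ] V →ₗ[ℝ] ℝ)
    (halt : ∀ x, ω x x = 0)
    (hnondeg : ∀ x, (∀ y, ω x y = 0) → x = 0) :
    spLieAlgebra ω = Submodule.span ℝ (Set.range (sqEndo ω)) :=
  le_antisymm (spLieAlgebra_le_span_sqEndo halt hnondeg) (span_sqEndo_le_spLieAlgebra halt)
end

section
/- If q is a quadratic form on ℝⁿ (n ≥ 1) satisfying q(v) ≥ 1 for every v ∈ ℤⁿ \ {0}, then q is positive definite. -/
/-!
A negative value `q x < 0` would persist on a neighbourhood of `x`, hence at some rational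
point `v / m`, and then `q v = m² q (v / m) < 0`; so `q` is positive semidefinite. If
`q x = 0` with `x ≠ 0`, then `A x = 0`, so `q` is invariant under translation by multiples of
`x`. Dirichlet's simultaneous approximation theorem gives `m ≥ 1` and a nonzero integer
vector `v` with `v - m x` arbitrarily small, whence `q v = q (v - m x) < 1`.
-/

open Matrix

theorem exists_pos_nat_norm_smul_sub_int_lt {ι : Type*} [Fintype ι] (x : ι → ℝ) {ε : ℝ}
    (hε : 0 < ε) : ∃ m : ℕ, 0 < m ∧ ∃ v : ι → ℤ, ‖(m : ℝ) • x - fun i => (v i : ℝ)‖ < ε := by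
  -- pigeonhole on the cells of side `ε` containing the fractional parts of `k • x`
  have hcell (k : ℕ) (i : ι) : ⌊Int.fract (k * x i) / ε⌋ ∈ Set.Icc 0 ⌈ε⁻¹⌉ := by
    constructor
    · exact Int.floor_nonneg.2 (div_nonneg (Int.fract_nonneg _) hε.le)
    · refine Int.floor_le_ceil _ |>.trans (Int.ceil_mono ?_)
      rw [div_eq_mul_inv]
      exact mul_le_of_le_one_left (inv_nonneg.2 hε.le) (Int.fract_lt_one _).le
  obtain ⟨a, b, hab, hfloor⟩ := (Set.Finite.pi fun _ : ι => Set.finite_Icc 0 ⌈ε⁻¹⌉)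
    |>.exists_lt_map_eq_of_forall_mem (f := fun (k : ℕ) i => ⌊Int.fract (k * x i) / ε⌋)
      fun k => Set.mem_univ_pi.2 (hcell k)
  refine ⟨b - a, Nat.sub_pos_of_lt hab, fun i => ⌊b * x i⌋ - ⌊a * x i⌋, (pi_norm_lt_iff hε).2
    fun i => ?_⟩
  have hclose := Int.abs_sub_lt_one_of_floor_eq_floor (congrFun hfloor i).symm
  rw [← sub_div, abs_div, abs_of_pos hε, div_lt_one hε] at hclose
  refine lt_of_eq_of_lt ?_ hclose
  simp only [Pi.sub_apply, Pi.smul_apply, smul_eq_mul, Nat.cast_sub hab.le, Int.cast_sub,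
    Real.norm_eq_abs, Int.fract]
  ring_nf

namespace Matrix

variable {ι : Type*} [Fintype ι]

theorem smul_dotProduct_mulVec_smul {R : Type*} [CommSemiring R] (A : Matrix ι ι R) (c : R)
    (y : ι → R) : c • y ⬝ᵥ A *ᵥ (c • y) = c * c * (y ⬝ᵥ A *ᵥ y) := by
  simp only [mulVec_smul, smul_dotProduct, dotProduct_smul, smul_eq_mul, mul_assoc]

theorem IsSymm.sub_smul_dotProduct_mulVec_sub_smul {R : Type*} [CommRing R] {A : Matrix ι ι R}
    (hA : A.IsSymm) {x : ι → R} (hx : A *ᵥ x = 0) (y : ι → R) (c : R) :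
    (y - c • x) ⬝ᵥ A *ᵥ (y - c • x) = y ⬝ᵥ A *ᵥ y := by
  have hxA : x ᵥ* A = 0 := by rw [← mulVec_transpose, hA.eq, hx]
  simp [mulVec_sub, mulVec_smul, hx, sub_dotProduct, smul_dotProduct, dotProduct_mulVec x, hxA]

theorem posSemidef_of_forall_int_dotProduct_mulVec_nonneg {A : Matrix ι ι ℝ}
    (hA : A.IsHermitian)
    (h : ∀ v : ι → ℤ, 0 ≤ (fun i => (v i : ℝ)) ⬝ᵥ A *ᵥ (fun i => (v i : ℝ))) :
    A.PosSemidef := by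
  refine posSemidef_iff_dotProduct_mulVec.2 ⟨hA, fun x => ?_⟩
  rw [star_trivial]
  by_contra! hx
  obtain ⟨ε, hε, hneg⟩ := Metric.eventually_nhds_iff.1
    (((by fun_prop : Continuous fun y : ι → ℝ => y ⬝ᵥ A *ᵥ y).tendsto x).eventually_lt_const hx)
  obtain ⟨m, hm, v, hv⟩ := exists_pos_nat_norm_smul_sub_int_lt x hε
  have hm0 : (0 : ℝ) < m := Nat.cast_pos.2 hm
  set w : ι → ℝ := (m : ℝ)⁻¹ • fun i => (v i : ℝ)
  have hw : dist w x < ε := calc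
    dist w x = (m : ℝ)⁻¹ * ‖(m : ℝ) • x - fun i => (v i : ℝ)‖ := by
      rw [dist_eq_norm, ← inv_smul_smul₀ hm0.ne' x, ← smul_sub, norm_smul, norm_inv,
        RCLike.norm_natCast, norm_sub_rev, smul_inv_smul₀ hm0.ne']
    _ ≤ ‖(m : ℝ) • x - fun i => (v i : ℝ)‖ :=
      inv_mul_le_of_le_mul₀ hm0.le (norm_nonneg _)
        (le_mul_of_one_le_left (norm_nonneg _) (Nat.one_le_cast.2 hm))
    _ < ε := hv
  have hvw : (fun i => (v i : ℝ)) = (m : ℝ) • w := (smul_inv_smul₀ hm0.ne' _).symm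
  have hqv := h v
  rw [hvw, smul_dotProduct_mulVec_smul] at hqv
  exact (hneg hw).not_ge (nonneg_of_mul_nonneg_right hqv (by positivity))

theorem PosSemidef.posDef_of_forall_int_ne_zero_one_le {A : Matrix ι ι ℝ} (hA : A.PosSemidef)
    (h : ∀ v : ι → ℤ, v ≠ 0 → 1 ≤ (fun i => (v i : ℝ)) ⬝ᵥ A *ᵥ (fun i => (v i : ℝ))) :
    A.PosDef := by
  refine posDef_iff_dotProduct_mulVec.2 ⟨hA.1, fun x hx => ?_⟩
  refine (hA.dotProduct_mulVec_nonneg x).lt_of_ne' fun hq => ?_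
  have hker : A *ᵥ x = 0 := (hA.dotProduct_mulVec_zero_iff x).1 hq
  obtain ⟨δ, hδ, hsmall⟩ := Metric.eventually_nhds_iff.1
    (((by fun_prop : Continuous fun y : ι → ℝ => y ⬝ᵥ A *ᵥ y).tendsto 0).eventually_lt_const
      (by simp : (0 : ι → ℝ) ⬝ᵥ A *ᵥ 0 < 1))
  obtain ⟨m, hm, v, hv⟩ := exists_pos_nat_norm_smul_sub_int_lt x (lt_min hδ (norm_pos_iff.2 hx))
  have hv0 : v ≠ 0 := by
    rintro rfl
    have hmx : ‖(m : ℝ) • x‖ < ‖x‖ := by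
      simpa [← Pi.zero_def] using hv.trans_le (min_le_right _ _)
    rw [norm_smul, RCLike.norm_natCast] at hmx
    exact hmx.not_ge (le_mul_of_one_le_left (norm_nonneg _) (Nat.one_le_cast.2 hm))
  have hqv := hsmall (y := (fun i => (v i : ℝ)) - (m : ℝ) • x) <| by
    rw [dist_zero_right, norm_sub_rev]
    exact hv.trans_le (min_le_left _ _)
  rw [(isHermitian_iff_isSymm.1 hA.1).sub_smul_dotProduct_mulVec_sub_smul hker] at hqv
  exact (h v hv0).not_gt hqv

end Matrix

theorem posDef_of_one_le_on_int_vectors_general {n : ℕ}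
    (A : Matrix (Fin n) (Fin n) ℝ) (hA : A.IsSymm)
    (h : ∀ v : Fin n → ℤ, v ≠ 0 →
      1 ≤ (fun i => (v i : ℝ)) ⬝ᵥ A.mulVec (fun i => (v i : ℝ))) :
    A.PosDef := by
  have hnonneg (v : Fin n → ℤ) : 0 ≤ (fun i => (v i : ℝ)) ⬝ᵥ A *ᵥ (fun i => (v i : ℝ)) := by
    rcases eq_or_ne v 0 with rfl | hv
    · simp
    · exact zero_le_one.trans (h v hv)
  exact (posSemidef_of_forall_int_dotProduct_mulVec_nonneg (isHermitian_iff_isSymm.2 hA)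
    hnonneg).posDef_of_forall_int_ne_zero_one_le h

/-- A quadratic form on `ℝⁿ` (`n ≥ 1`), given by a symmetric matrix `A`, taking values `≥ 1`
at every nonzero integral vector is positive definite. -/
theorem posDef_of_one_le_on_int_vectors {n : ℕ} (hn : 1 ≤ n)
    (A : Matrix (Fin n) (Fin n) ℝ) (hA : A.IsSymm)
    (h : ∀ v : Fin n → ℤ, v ≠ 0 →
      1 ≤ (fun i => (v i : ℝ)) ⬝ᵥ A.mulVec (fun i => (v i : ℝ))) :
    A.PosDef :=
  posDef_of_one_le_on_int_vectors_general A hA h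
end
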